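/- arXiv:2203.10684 — 2 statements merged into one kernel-verified Lean document; each statement's English description precedes it below -/
import Mathlib

section
/- Let d_1 > … > d_k and e_1 > … > e_l be positive integers, ν_1,…,ν_k and μ_1,…,μ_l nonzero integers, and let m > 1 be an integer coprime to every d_i and every e_j. If −Σ_{j=1}^k ν_j Λ_{d_j m} + Σ_{j=1}^k ν_j Λ_{d_j} = −Σ_{j=1}^l μ_j Λ_{e_j m} + Σ_{j=1}^l μ_j Λ_{e_j} holds in ℤ[ℂ*], then k = l, and d_j = e_j and ν_j = μ_j for all j. -/
open scoped BigOperators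

/-- `Lam d` is the element `Λ_d` of the group ring `ℤ[ℂ*]`: the formal sum of all
`d`-th roots of unity, i.e. the divisor of `t^d - 1`. -/
noncomputable def Lam (d : ℕ) : MonoidAlgebra ℤ ℂˣ :=
  if h : d = 0 then 0 else
    haveI : NeZero d := ⟨h⟩
    haveI : Fintype (rootsOfUnity d ℂ) := Fintype.ofFinite _
    ∑ ζ : rootsOfUnity d ℂ, MonoidAlgebra.of ℤ ℂˣ (ζ : ℂˣ)

/-!
The coefficient of `Λ_n` at a unit `u` is `1` exactly when the order of `u` divides `n`. Reading
both sides at a unit of order `a * m` kills the terms `Λ_{d_j}` (as `m` is coprime to `d_j`) and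
turns `Λ_{d_j m}` into the condition `a ∣ d_j`, so the two sides have the same divisor sums
`a ↦ ∑_{a ∣ d_j} ν_j` on all `a > 0`. These sums determine the finitely supported weight
`d_j ↦ ν_j` on positive integers: at the largest point where two weights differ, only that point
contributes. Strict antitonicity then recovers the enumerations from the weight.
-/

theorem Finsupp.sum_mapDomain_equivFunOnFinite_symm {ι α M N : Type*} [Fintype ι]
    [AddCommMonoid M] [AddCommMonoid N] {d : ι → α} (hd : Function.Injective d) (ν : ι → M)
    (g : α → M → N) (hg : ∀ a, g a 0 = 0) :
    (Finsupp.mapDomain d (Finsupp.equivFunOnFinite.symm ν)).sum g = ∑ i, g (d i) (ν i) := by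
  rw [Finsupp.sum_mapDomain_index_inj hd, Finsupp.sum_fintype _ _ fun _ => hg _]
  rfl

theorem Finsupp.eq_of_sum_ite_dvd_eq {M : Type*} [AddCommGroup M] {c c' : ℕ →₀ M}
    (hc : c 0 = 0) (hc' : c' 0 = 0)
    (h : ∀ a, 0 < a →
      (c.sum fun n z => if a ∣ n then z else 0) = c'.sum fun n z => if a ∣ n then z else 0) :
    c = c' := by
  rw [← sub_eq_zero]
  by_contra hg
  set g := c - c'
  have hne : g.support.Nonempty := Finsupp.support_nonempty_iff.mpr hg
  set n := g.support.max' hne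
  have hn : g n ≠ 0 := Finsupp.mem_support_iff.mp (g.support.max'_mem hne)
  have hg0 : g 0 = 0 := by simp [g, hc, hc']
  have hn0 : 0 < n := Nat.pos_of_ne_zero fun h => hn (h ▸ hg0)
  have hsum : (g.sum fun b z => if n ∣ b then z else 0) = g n := by
    rw [Finsupp.sum_eq_single n _ (fun _ => if_pos dvd_rfl), if_pos dvd_rfl]
    intro b hb hbn
    have hb0 : 0 < b := Nat.pos_of_ne_zero fun h => hb (h ▸ hg0)
    have hbn' : b ≤ n := g.support.le_max' b (Finsupp.mem_support_iff.mpr hb)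
    exact if_neg fun hdvd => hbn (le_antisymm hbn' (Nat.le_of_dvd hb0 hdvd))
  apply hn
  rw [← hsum, Finsupp.sum_sub_index (fun _ _ _ => by split_ifs <;> simp), h n hn0, sub_self]

theorem StrictAnti.exists_cast_eq_of_mapDomain_eq {γ M : Type*} [Preorder γ] [AddCommMonoid M]
    {k l : ℕ}
    {d : Fin k → γ} {e : Fin l → γ} {ν : Fin k → M} {μ : Fin l → M}
    (hd : StrictAnti d) (he : StrictAnti e) (hν : ∀ i, ν i ≠ 0) (hμ : ∀ j, μ j ≠ 0)
    (h : Finsupp.mapDomain d (Finsupp.equivFunOnFinite.symm ν)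
      = Finsupp.mapDomain e (Finsupp.equivFunOnFinite.symm μ)) :
    ∃ h : k = l, ∀ j, d j = e (Fin.cast h j) ∧ ν j = μ (Fin.cast h j) := by
  classical
  have hsupp := congrArg Finsupp.support h
  rw [Finsupp.mapDomain_support_of_injective hd.injective,
    Finsupp.mapDomain_support_of_injective he.injective] at hsupp
  have hνs : (Finsupp.equivFunOnFinite.symm ν).support = Finset.univ := by
    ext; simp [hν]
  have hμs : (Finsupp.equivFunOnFinite.symm μ).support = Finset.univ := by
    ext; simp [hμ]
  rw [hνs, hμs] at hsupp
  obtain rfl : k = l := by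
    simpa [Finset.card_image_of_injective _ hd.injective,
      Finset.card_image_of_injective _ he.injective] using congrArg Finset.card hsupp
  obtain rfl : d = e :=
    (hd.range_inj he).mp (by simpa using congrArg ((↑) : Finset γ → Set γ) hsupp)
  refine ⟨rfl, fun j => ⟨rfl, ?_⟩⟩
  simpa [Finsupp.mapDomain_apply hd.injective] using DFunLike.congr_fun h (d j)

lemma Complex.exists_unit_orderOf_eq {n : ℕ} (hn : n ≠ 0) : ∃ u : ℂˣ, orderOf u = n :=
  ⟨_, ((Complex.isPrimitiveRoot_exp n hn).isUnit_unit hn).eq_orderOf.symm⟩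

lemma Lam_coeff_apply {d : ℕ} (hd : d ≠ 0) (u : ℂˣ) :
    (Lam d).coeff u = if orderOf u ∣ d then 1 else 0 := by
  have : NeZero d := ⟨hd⟩
  classical
  rw [Lam, dif_neg hd, MonoidAlgebra.coeff_sum, Finset.sum_apply']
  simp only [orderOf_dvd_iff_pow_eq_one, MonoidAlgebra.of_apply, MonoidAlgebra.coeff_single,
    Finsupp.single_apply]
  split_ifs with hu
  · rw [Finset.sum_eq_single (⟨u, (mem_rootsOfUnity d u).2 hu⟩ : rootsOfUnity d ℂ)
      (fun ζ _ hζ => if_neg fun h => hζ (Subtype.ext h)) (by simp), if_pos rfl]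
  · refine Finset.sum_eq_zero fun ζ _ => if_neg fun h => hu ?_
    rw [← h]
    exact_mod_cast (mem_rootsOfUnity d _).1 ζ.2

lemma coeff_sum_smul_Lam {ι : Type*} [Fintype ι] (ν : ι → ℤ) {d : ι → ℕ} (hd : ∀ i, d i ≠ 0)
    (u : ℂˣ) : (∑ i, ν i • Lam (d i)).coeff u = ∑ i, if orderOf u ∣ d i then ν i else 0 := by
  simp only [MonoidAlgebra.coeff_sum, Finset.sum_apply', MonoidAlgebra.coeff_smul_apply,
    Lam_coeff_apply (hd _), smul_eq_mul, mul_ite, mul_one, mul_zero]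

lemma coeff_neg_sum_Lam_mul_add_sum_Lam {ι : Type*} [Fintype ι] (ν : ι → ℤ) {d : ι → ℕ}
    (hd : ∀ i, d i ≠ 0) {m : ℕ} (hm : 1 < m) (hmd : ∀ i, m.Coprime (d i)) (a : ℕ) {u : ℂˣ}
    (hu : orderOf u = a * m) :
    (-∑ i, ν i • Lam (d i * m) + ∑ i, ν i • Lam (d i)).coeff u
      = -∑ i, if a ∣ d i then ν i else 0 := by
  have hm0 : m ≠ 0 := by omega
  have hnot : ∀ i, ¬ a * m ∣ d i := fun i h =>
    hm.ne' ((hmd i).eq_one_of_dvd ((dvd_mul_left m a).trans h))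
  rw [MonoidAlgebra.coeff_add, MonoidAlgebra.coeff_neg, Finsupp.add_apply, Finsupp.neg_apply,
    coeff_sum_smul_Lam ν (fun i => mul_ne_zero (hd i) hm0), coeff_sum_smul_Lam ν hd]
  simp only [hu, Nat.mul_dvd_mul_iff_right (Nat.pos_of_ne_zero hm0), hnot, if_false,
    Finset.sum_const_zero, add_zero]

theorem lam_join_identity_unique (k l : ℕ)
    (ν : Fin k → ℤ) (d : Fin k → ℕ) (μ : Fin l → ℤ) (e : Fin l → ℕ)
    (hd : ∀ i, 0 < d i) (he : ∀ j, 0 < e j)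
    (hdanti : StrictAnti d) (heanti : StrictAnti e)
    (hν : ∀ i, ν i ≠ 0) (hμ : ∀ j, μ j ≠ 0)
    (m : ℕ) (hm : 1 < m)
    (hmd : ∀ i, Nat.Coprime m (d i)) (hme : ∀ j, Nat.Coprime m (e j))
    (heq : -∑ j, ν j • Lam (d j * m) + ∑ j, ν j • Lam (d j)
         = -∑ j, μ j • Lam (e j * m) + ∑ j, μ j • Lam (e j)) :
    ∃ h : k = l, ∀ j : Fin k, d j = e (Fin.cast h j) ∧ ν j = μ (Fin.cast h j) := by
  have hd0 : ∀ i, d i ≠ 0 := fun i => (hd i).ne'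
  have he0 : ∀ j, e j ≠ 0 := fun j => (he j).ne'
  have hdivisor : ∀ a, 0 < a →
      (∑ i, if a ∣ d i then ν i else 0) = ∑ j, if a ∣ e j then μ j else 0 := by
    intro a ha
    obtain ⟨u, hu⟩ := Complex.exists_unit_orderOf_eq (mul_ne_zero ha.ne' (by omega : m ≠ 0))
    simpa only [coeff_neg_sum_Lam_mul_add_sum_Lam ν hd0 hm hmd a hu,
      coeff_neg_sum_Lam_mul_add_sum_Lam μ he0 hm hme a hu, neg_inj]
      using congrArg (fun x => x.coeff u) heq
  refine hdanti.exists_cast_eq_of_mapDomain_eq heanti hν hμ <|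
    Finsupp.eq_of_sum_ite_dvd_eq
      (Finsupp.mapDomain_of_notMem_range _ _ fun ⟨i, hi⟩ => hd0 i hi)
      (Finsupp.mapDomain_of_notMem_range _ _ fun ⟨j, hj⟩ => he0 j hj) fun a ha => ?_
  rw [Finsupp.sum_mapDomain_equivFunOnFinite_symm hdanti.injective ν
      (fun n (z : ℤ) => if a ∣ n then z else 0) fun _ => ite_self 0,
    Finsupp.sum_mapDomain_equivFunOnFinite_symm heanti.injective μ
      (fun n (z : ℤ) => if a ∣ n then z else 0) fun _ => ite_self 0]
  exact hdivisor a ha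
end

section
/- Fix an integer m ≥ 1 with m odd or simply gcd(m+4, 4) arbitrary, and suppose Ξ = Σ_{i=1}^s ν_i Λ_{d_i} ∈ ℤ[ℂ*] with d_1 < … < d_s positive integers and ν_i nonzero integers satisfies (1 − Λ_2) · Ξ = 1 − 4Λ_4 − 3Λ_{4+m} (or = 1 − 3Λ_4 − 4Λ_{4+m}) in ℤ[ℂ*]. Then necessarily d_1 = 1 with ν_1 = 1, and d_2 = 2 with ν_2 = −1. -/
/-!
Since `1 - Λ₂ = -⟨-1⟩` is a unit of square one, `Ξ = -⟨-1⟩ · (Λ₁ - aΛ₄ - bΛ_{4+m})` with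
`{a, b} = {3, 4}`, and `⟨-1⟩ · Λₙ` equals `Λₙ` for even `n` and `Λ_{2n} - Λₙ` for odd `n`. Hence
the expansion of `Ξ` in the `Λₙ` starts with `Λ₁ - Λ₂`, all further terms having index at least
`4`. The `Λₙ` (`n ≥ 1`) are linearly independent: the coefficient of `Λₙ` with `n` maximal is read
off at a primitive `n`-th root of unity. So this expansion is the given one, which forces
`d₁ = 1`, `ν₁ = 1`, `d₂ = 2`, `ν₂ = -1`.
-/

open scoped BigOperators

open Finsupp

lemma coeff_lam {n : ℕ} (hn : n ≠ 0) (g : ℂˣ) :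
    (Lam n).coeff g = if g ^ n = 1 then 1 else 0 := by
  classical
  have : NeZero n := ⟨hn⟩
  -- the instance over which `Lam n` sums
  let : Fintype (rootsOfUnity n ℂ) := Fintype.ofFinite _
  rw [Lam, dif_neg hn, MonoidAlgebra.coeff_sum]
  simp only [MonoidAlgebra.of_apply, MonoidAlgebra.coeff_single, finsetSum_apply,
    single_apply]
  split_ifs with h
  · rw [Finset.sum_eq_single (⟨g, (mem_rootsOfUnity n g).mpr h⟩ : rootsOfUnity n ℂ)
      (fun ζ _ hζ => if_neg fun he => hζ (Subtype.ext he)) (fun h => absurd (Finset.mem_univ _) h),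
      if_pos rfl]
  · exact Finset.sum_eq_zero fun ζ _ => if_neg fun (he : (ζ : ℂˣ) = g) =>
      h (he ▸ (mem_rootsOfUnity n _).mp ζ.prop)

lemma lam_one : Lam 1 = 1 := by
  ext g
  rw [coeff_lam one_ne_zero, pow_one, MonoidAlgebra.one_def, MonoidAlgebra.coeff_single,
    single_apply]
  simp only [eq_comm]

lemma coeff_linearCombination_lam (c : ℕ →₀ ℤ) (g : ℂˣ) :
    (linearCombination ℤ Lam c).coeff g = ∑ k ∈ c.support with k ≠ 0 ∧ g ^ k = 1, c k := by
  rw [linearCombination_apply, Finsupp.sum, MonoidAlgebra.coeff_sum, finsetSum_apply,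
    Finset.sum_filter]
  refine Finset.sum_congr rfl fun k _ => ?_
  rcases eq_or_ne k 0 with rfl | hk
  · simp [Lam]
  · rw [MonoidAlgebra.coeff_smul_apply, coeff_lam hk, smul_eq_mul, mul_ite, mul_one, mul_zero]
    simp only [ne_eq, hk, not_false_eq_true, true_and]

lemma apply_eq_zero_of_linearCombination_lam_eq_zero {c : ℕ →₀ ℤ}
    (h : linearCombination ℤ Lam c = 0) {n : ℕ} (hn : n ≠ 0) : c n = 0 := by
  by_contra hcn
  set T := c.support.filter (· ≠ 0)
  have hT : T.Nonempty := ⟨n, by simp [T, hcn, hn]⟩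
  obtain ⟨hN, hN0⟩ := Finset.mem_filter.mp (T.max'_mem hT)
  set N := T.max' hT
  have hζ := Complex.isPrimitiveRoot_exp N hN0
  have hcoeff := congrArg (MonoidAlgebra.coeff · ((hζ.isUnit hN0).unit)) h
  simp only [coeff_linearCombination_lam, (hζ.isUnit_unit hN0).pow_eq_one_iff_dvd] at hcoeff
  rw [Finset.sum_eq_single_of_mem N (by simp [hN, hN0])] at hcoeff
  · exact mem_support_iff.mp hN hcoeff
  · rintro k hk hkN
    obtain ⟨hkc, hk0, hNk⟩ := by simpa using hk
    have : k ≤ N := T.le_max' k (by simp [T, hkc, hk0])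
    exact absurd (Nat.le_antisymm this (Nat.le_of_dvd (Nat.pos_of_ne_zero hk0) hNk)) hkN

lemma apply_eq_of_linearCombination_lam_eq {c c' : ℕ →₀ ℤ}
    (h : linearCombination ℤ Lam c = linearCombination ℤ Lam c') {n : ℕ} (hn : n ≠ 0) :
    c n = c' n :=
  sub_eq_zero.mp <|
    apply_eq_zero_of_linearCombination_lam_eq_zero (c := c - c') (by rw [map_sub, h, sub_self]) hn

lemma Units.pow_two_mul_eq_one_iff {R : Type*} [Ring R] [NoZeroDivisors R] {g : Rˣ} {n : ℕ} :
    g ^ (2 * n) = 1 ↔ g ^ n = 1 ∨ g ^ n = -1 := by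
  simp only [pow_mul', Units.ext_iff, Units.val_pow_eq_pow_val, Units.val_one, Units.val_neg,
    sq_eq_one_iff]

/-- The `Λ`-expansion of `⟨-1⟩ · Λₙ`: the map `ζ ↦ -ζ` permutes the `n`-th roots of unity for
even `n`, and for odd `n` sends them onto the roots of `t^n = -1`, whose sum is `Λ_{2n} - Λₙ`. -/
noncomputable def negOneMulLamCoeffs (n : ℕ) : ℕ →₀ ℤ :=
  if Even n then single n 1 else single (2 * n) 1 - single n 1

lemma negOneMulLamCoeffs_one : negOneMulLamCoeffs 1 = single 2 1 - single 1 1 := by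
  simp [negOneMulLamCoeffs]

lemma negOneMulLamCoeffs_apply_of_lt {n k : ℕ} (h : k < n) : negOneMulLamCoeffs n k = 0 := by
  unfold negOneMulLamCoeffs
  split_ifs <;> simp [single_apply] <;> omega

lemma linearCombination_negOneMulLamCoeffs {n : ℕ} (hn : n ≠ 0) :
    linearCombination ℤ Lam (negOneMulLamCoeffs n) = MonoidAlgebra.single (-1) 1 * Lam n := by
  ext g
  rw [MonoidAlgebra.coeff_single_mul_apply, one_mul, inv_neg_one, neg_one_mul, coeff_lam hn]
  unfold negOneMulLamCoeffs
  by_cases heven : Even n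
  · rw [if_pos heven, linearCombination_single, one_smul, coeff_lam hn, heven.neg_pow]
  · rw [if_neg heven, map_sub, linearCombination_single, linearCombination_single, one_smul,
      one_smul, MonoidAlgebra.coeff_sub, Finsupp.sub_apply, coeff_lam hn, coeff_lam (by omega),
      (Nat.not_even_iff_odd.mp heven).neg_pow]
    simp only [Units.pow_two_mul_eq_one_iff, neg_eq_iff_eq_neg]
    by_cases h1 : g ^ n = 1
    · simp [h1, (neg_units_ne_self 1).symm]
    · by_cases h2 : g ^ n = -1 <;> simp [h1, h2]

lemma exists_lamCoeffs_of_one_sub_lam_two_mul_eq {Ξ : MonoidAlgebra ℤ ℂˣ} {a b : ℤ} {k n : ℕ}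
    (hk : 3 ≤ k) (hn : 3 ≤ n) (h : (1 - Lam 2) * Ξ = 1 - a • Lam k - b • Lam n) :
    ∃ c : ℕ →₀ ℤ, linearCombination ℤ Lam c = Ξ ∧ c 1 = 1 ∧ c 2 = -1 := by
  set u : MonoidAlgebra ℤ ℂˣ := MonoidAlgebra.single (-1) 1
  have hu : u * u = 1 := by simp [u, MonoidAlgebra.single_mul_single, MonoidAlgebra.one_def]
  have hlam : ∀ {j}, j ≠ 0 → u * Lam j = linearCombination ℤ Lam (negOneMulLamCoeffs j) :=
    fun hj => (linearCombination_negOneMulLamCoeffs hj).symm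
  have hu1 : 1 - Lam 2 = -u := by
    have := hlam one_ne_zero
    rw [lam_one, mul_one, negOneMulLamCoeffs_one, map_sub, linearCombination_single,
      linearCombination_single, one_smul, one_smul, lam_one] at this
    rw [this, neg_sub]
  refine ⟨-negOneMulLamCoeffs 1 + a • negOneMulLamCoeffs k + b • negOneMulLamCoeffs n, ?_, ?_, ?_⟩
  · have hΞ : Ξ = -(u * (1 - a • Lam k - b • Lam n)) := by
      rw [hu1, neg_mul] at h
      rw [← h, mul_neg, neg_neg, ← mul_assoc, hu, one_mul]
    rw [hΞ, ← lam_one, mul_sub, mul_sub, mul_smul_comm, mul_smul_comm, hlam one_ne_zero,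
      hlam (by omega), hlam (by omega)]
    simp only [map_add, map_neg, map_smul]
    abel
  all_goals simp [negOneMulLamCoeffs_one, negOneMulLamCoeffs_apply_of_lt,
    show 1 < k by omega, show 2 < k by omega, show 1 < n by omega, show 2 < n by omega]

lemma exists_apply_zero_eq_one_and_apply_one_eq_two_of_strictMono {s : ℕ} {d : Fin s → ℕ}
    (hd : ∀ i, 0 < d i) (hmono : StrictMono d) (h1 : 1 ∈ Set.range d) (h2 : 2 ∈ Set.range d) :
    ∃ (h1 : 0 < s) (h2 : 1 < s), d ⟨0, h1⟩ = 1 ∧ d ⟨1, h2⟩ = 2 := by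
  obtain ⟨i, hi⟩ := h1
  obtain ⟨j, hj⟩ := h2
  have hs0 : 0 < s := i.pos
  have hd0 : d ⟨0, hs0⟩ = 1 := by
    have := hmono.monotone (show (⟨0, hs0⟩ : Fin s) ≤ i from Fin.mk_le_mk.mpr (Nat.zero_le _))
    have := hd ⟨0, hs0⟩
    omega
  have hj1 : 1 ≤ (j : ℕ) := Nat.one_le_iff_ne_zero.mpr fun hj0 => by
    rw [show j = ⟨0, hs0⟩ from Fin.ext hj0, hd0] at hj
    omega
  have hs1 : 1 < s := lt_of_le_of_lt hj1 j.isLt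
  refine ⟨hs0, hs1, hd0, ?_⟩
  have := hmono (show (⟨0, hs0⟩ : Fin s) < ⟨1, hs1⟩ from Fin.mk_lt_mk.mpr Nat.zero_lt_one)
  have := hmono.monotone (show (⟨1, hs1⟩ : Fin s) ≤ j from Fin.mk_le_mk.mpr hj1)
  omega

theorem lam_multiplicity_two_exclusion_general (m : ℕ)
    (s : ℕ) (ν : Fin s → ℤ) (d : Fin s → ℕ)
    (hd : ∀ i, 0 < d i) (hmono : StrictMono d)
    (heq : (1 - Lam 2) * (∑ i, ν i • Lam (d i)) = 1 - (4 : ℤ) • Lam 4 - (3 : ℤ) • Lam (4 + m)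
      ∨ (1 - Lam 2) * (∑ i, ν i • Lam (d i)) = 1 - (3 : ℤ) • Lam 4 - (4 : ℤ) • Lam (4 + m)) :
    ∃ (h1 : 0 < s) (h2 : 1 < s),
      d ⟨0, h1⟩ = 1 ∧ ν ⟨0, h1⟩ = 1 ∧ d ⟨1, h2⟩ = 2 ∧ ν ⟨1, h2⟩ = -1 := by
  obtain ⟨c, hc, hc1, hc2⟩ : ∃ c : ℕ →₀ ℤ,
      linearCombination ℤ Lam c = ∑ i, ν i • Lam (d i) ∧ c 1 = 1 ∧ c 2 = -1 := by
    rcases heq with h | h <;>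
      exact exists_lamCoeffs_of_one_sub_lam_two_mul_eq (by norm_num) (by omega) h
  set F : ℕ →₀ ℤ := mapDomain d (equivFunOnFinite.symm ν)
  have hF : linearCombination ℤ Lam F = ∑ i, ν i • Lam (d i) := by
    rw [linearCombination_mapDomain, linearCombination_apply]
    exact sum_fintype _ _ fun _ => zero_smul _ _
  have hFc : ∀ {n}, n ≠ 0 → F n = c n := apply_eq_of_linearCombination_lam_eq (hF.trans hc.symm)
  have hF1 : F 1 = 1 := (hFc one_ne_zero).trans hc1
  have hF2 : F 2 = -1 := (hFc two_ne_zero).trans hc2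
  have hrange : ∀ k, F k ≠ 0 → k ∈ Set.range d := fun k hk =>
    by_contra fun hk' => hk (mapDomain_of_notMem_range _ _ hk')
  obtain ⟨h1, h2, hd0, hd1⟩ := exists_apply_zero_eq_one_and_apply_one_eq_two_of_strictMono hd hmono
    (hrange 1 (hF1 ▸ one_ne_zero)) (hrange 2 (hF2 ▸ by decide))
  have hν : ∀ i, ν i = F (d i) := fun i =>
    (mapDomain_apply hmono.injective (equivFunOnFinite.symm ν) i).symm
  exact ⟨h1, h2, hd0, by rw [hν, hd0, hF1], hd1, by rw [hν, hd1, hF2]⟩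

theorem lam_multiplicity_two_exclusion (m : ℕ) (hm : 1 ≤ m)
    (s : ℕ) (ν : Fin s → ℤ) (d : Fin s → ℕ)
    (hd : ∀ i, 0 < d i) (hmono : StrictMono d) (hν : ∀ i, ν i ≠ 0)
    (heq : (1 - Lam 2) * (∑ i, ν i • Lam (d i)) = 1 - (4 : ℤ) • Lam 4 - (3 : ℤ) • Lam (4 + m)
      ∨ (1 - Lam 2) * (∑ i, ν i • Lam (d i)) = 1 - (3 : ℤ) • Lam 4 - (4 : ℤ) • Lam (4 + m)) :
    ∃ (h1 : 0 < s) (h2 : 1 < s),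
      d ⟨0, h1⟩ = 1 ∧ ν ⟨0, h1⟩ = 1 ∧ d ⟨1, h2⟩ = 2 ∧ ν ⟨1, h2⟩ = -1 :=
  lam_multiplicity_two_exclusion_general m s ν d hd hmono heq
end
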